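/- Let S_X : [−π, π] → ℝ be integrable and nonnegative, let r, g : [−π, π] → ℝ be measurable and nonnegative with g·S_X integrable, and suppose |r(ω) − g(ω)| ≤ ε₀ for almost every ω ∈ [−π, π]. Then r·S_X is integrable and for every n ≥ 1, |M_{r·S_X}(n) − M_{g·S_X}(n)| ≤ ε₀ · M_{S_X}(n); consequently, whenever M_{g·S_X}(n) > 0, |M_{r·S_X}(n)/M_{g·S_X}(n) − 1| ≤ ε₀ · M_{S_X}(n)/M_{g·S_X}(n). -/

import Mathlib

open MeasureTheory Real Filter Finset

/-- The `n`-th Fejér kernel `F_n(ω) = Σ_{j=-(n-1)}^{n-1} (1 - |j|/n) e^{-ijω}`,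
written in its (equal) real form via cosines. -/
noncomputable def fejerKernel (n : ℕ) (ω : ℝ) : ℝ :=
  ∑ j ∈ Finset.Icc (-(n : ℤ) + 1) ((n : ℤ) - 1), (1 - |(j : ℝ)| / n) * Real.cos (j * ω)

/-- The generalized mean squared displacement `M_S(n) = n ∫_{-π}^{π} F_n(ω) S(ω) dω`. -/
noncomputable def gmsd (S : ℝ → ℝ) (n : ℕ) : ℝ :=
  n * ∫ ω in (-π)..π, fejerKernel n ω * S ω


lemma sum_range_sub_eq (f : ℤ → ℝ) (n : ℕ) :
    ∑ k ∈ range n, f ((k:ℤ) - n) = ∑ j ∈ Finset.Icc (-(n:ℤ)) (-1), f j := by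
  refine Finset.sum_nbij' (i := fun k => (k:ℤ) - n) (j := fun z => (z + n).toNat) ?_ ?_ ?_ ?_ ?_
  · intro a ha; simp only [mem_range] at ha; simp only [Finset.mem_Icc]; omega
  · intro a ha; simp only [Finset.mem_Icc] at ha; simp only [mem_range]; omega
  · intro a ha; simp only [mem_range] at ha; simp
  · intro a ha; simp only [Finset.mem_Icc] at ha; simp; omega
  · intro a _; rfl

lemma sum_range_rsub_eq (f : ℤ → ℝ) (n : ℕ) :
    ∑ l ∈ range (n+1), f ((n:ℤ) - l) = ∑ j ∈ Finset.Icc (0:ℤ) (n:ℤ), f j := by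
  refine Finset.sum_nbij' (i := fun l => (n:ℤ) - l) (j := fun z => ((n:ℤ) - z).toNat) ?_ ?_ ?_ ?_ ?_
  · intro a ha; simp only [mem_range] at ha; simp only [Finset.mem_Icc]; omega
  · intro a ha; simp only [Finset.mem_Icc] at ha; simp only [mem_range]; omega
  · intro a ha; simp only [mem_range] at ha; simp
  · intro a ha; simp only [Finset.mem_Icc] at ha; simp; omega
  · intro a _; rfl

lemma sum_sub_eq (f : ℤ → ℝ) : ∀ n : ℕ,
    ∑ k ∈ range n, ∑ l ∈ range n, f ((k:ℤ) - (l:ℤ))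
      = ∑ j ∈ Finset.Icc (-(n:ℤ) + 1) ((n:ℤ) - 1), ((n:ℝ) - |(j:ℝ)|) * f j := by
  intro n
  induction n with
  | zero => simp
  | succ n ih =>
    have hsplit :
        ∑ k ∈ range (n+1), ∑ l ∈ range (n+1), f ((k:ℤ) - (l:ℤ))
          = (∑ k ∈ range n, ∑ l ∈ range n, f ((k:ℤ) - (l:ℤ)))
            + ((∑ k ∈ range n, f ((k:ℤ) - (n:ℤ))) + ∑ l ∈ range (n+1), f ((n:ℤ) - (l:ℤ))) := by
      rw [Finset.sum_range_succ]
      have : ∀ k ∈ range n, ∑ l ∈ range (n+1), f ((k:ℤ) - (l:ℤ))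
          = (∑ l ∈ range n, f ((k:ℤ) - (l:ℤ))) + f ((k:ℤ) - (n:ℤ)) := by
        intro k _; rw [Finset.sum_range_succ]
      rw [Finset.sum_congr rfl this, Finset.sum_add_distrib]
      ring
    rw [hsplit, ih, sum_range_sub_eq, sum_range_rsub_eq]
    -- unify Icc bounds for n+1
    have hIcc : Finset.Icc (-((n:ℤ)+1) + 1) (((n:ℤ)+1) - 1) = Finset.Icc (-(n:ℤ)) (n:ℤ) := by
      congr 1 <;> ring
    have hunion : Finset.Icc (-(n:ℤ)) (n:ℤ)
        = Finset.Icc (-(n:ℤ)) (-1) ∪ Finset.Icc (0:ℤ) (n:ℤ) := by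
      ext j; simp only [Finset.mem_Icc, Finset.mem_union]; omega
    have hdisj : Disjoint (Finset.Icc (-(n:ℤ)) (-1)) (Finset.Icc (0:ℤ) (n:ℤ)) := by
      rw [Finset.disjoint_left]; intro j hj hj'
      simp only [Finset.mem_Icc] at hj hj'; omega
    have hcast : ((n:ℤ)+1 : ℤ) = ((n+1 : ℕ) : ℤ) := by push_cast; ring
    push_cast
    rw [hIcc]
    -- RHS over Icc(-n,n) with coefficient (n+1-|j|)
    have hcoef : ∑ j ∈ Finset.Icc (-(n:ℤ)) (n:ℤ), ((n:ℝ) + 1 - |(j:ℝ)|) * f j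
        = (∑ j ∈ Finset.Icc (-(n:ℤ)) (n:ℤ), ((n:ℝ) - |(j:ℝ)|) * f j)
          + ∑ j ∈ Finset.Icc (-(n:ℤ)) (n:ℤ), f j := by
      rw [← Finset.sum_add_distrib]; apply Finset.sum_congr rfl; intro j _; ring
    rw [hcoef]
    have hshrink : ∑ j ∈ Finset.Icc (-(n:ℤ)) (n:ℤ), ((n:ℝ) - |(j:ℝ)|) * f j
        = ∑ j ∈ Finset.Icc (-(n:ℤ) + 1) ((n:ℤ) - 1), ((n:ℝ) - |(j:ℝ)|) * f j := by
      symm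
      apply Finset.sum_subset
      · apply Finset.Icc_subset_Icc <;> omega
      · intro j hj hj'
        simp only [Finset.mem_Icc] at hj hj'
        have h1 : j.natAbs = n := by omega
        have h2 : |(j:ℝ)| = (n:ℝ) := by
          rw [← Int.cast_abs, Int.abs_eq_natAbs, h1]; simp
        rw [h2]; ring
    rw [hshrink, hunion, Finset.sum_union hdisj]

lemma fejer_mul_n (n : ℕ) (hn : n ≠ 0) (ω : ℝ) :
    (n : ℝ) * fejerKernel n ω
      = (∑ k ∈ range n, Real.cos (k * ω))^2 + (∑ k ∈ range n, Real.sin (k * ω))^2 := by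
  have hn' : (n : ℝ) ≠ 0 := Nat.cast_ne_zero.mpr hn
  have lhs : (n : ℝ) * fejerKernel n ω
      = ∑ j ∈ Finset.Icc (-(n:ℤ) + 1) ((n:ℤ) - 1), ((n:ℝ) - |(j:ℝ)|) * Real.cos (j * ω) := by
    rw [fejerKernel, Finset.mul_sum]
    apply Finset.sum_congr rfl
    intro j _
    field_simp
  rw [lhs, ← sum_sub_eq (fun j => Real.cos ((j : ℝ) * ω)) n]
  rw [sq, sq, Finset.sum_mul_sum, Finset.sum_mul_sum, ← Finset.sum_add_distrib]
  apply Finset.sum_congr rfl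
  intro k _
  rw [← Finset.sum_add_distrib]
  apply Finset.sum_congr rfl
  intro l _
  have : ((((k:ℤ) - (l:ℤ)) : ℤ) : ℝ) * ω = (k:ℝ) * ω - (l:ℝ) * ω := by push_cast; ring
  rw [this, Real.cos_sub]

lemma fejer_nonneg (n : ℕ) (ω : ℝ) : 0 ≤ fejerKernel n ω := by
  rcases Nat.eq_zero_or_pos n with h | h
  · subst h; simp [fejerKernel]
  · have hn : n ≠ 0 := h.ne'
    have hn' : (0:ℝ) < n := by exact_mod_cast h
    have := fejer_mul_n n hn ω
    nlinarith [sq_nonneg (∑ k ∈ range n, Real.cos (k * ω)), sq_nonneg (∑ k ∈ range n, Real.sin (k * ω))]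


lemma fejer_continuous (n : ℕ) : Continuous (fejerKernel n) := by
  apply continuous_finset_sum
  intro j _
  exact continuous_const.mul (Real.continuous_cos.comp (continuous_const.mul continuous_id))

lemma fejer_bound (n : ℕ) : ∃ C : ℝ, ∀ ω, ‖fejerKernel n ω‖ ≤ C := by
  refine ⟨∑ j ∈ Finset.Icc (-(n : ℤ) + 1) ((n : ℤ) - 1), |1 - |(j : ℝ)| / n|, fun ω => ?_⟩
  rw [Real.norm_eq_abs, fejerKernel]
  refine (Finset.abs_sum_le_sum_abs _ _).trans (Finset.sum_le_sum fun j _ => ?_)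
  rw [abs_mul]
  calc |1 - |(j:ℝ)| / n| * |Real.cos (j * ω)| ≤ |1 - |(j:ℝ)| / n| * 1 :=
        mul_le_mul_of_nonneg_left (Real.abs_cos_le_one _) (abs_nonneg _)
    _ = |1 - |(j:ℝ)| / n| := mul_one _

theorem msd_error_transfer
    (SX r g : ℝ → ℝ) (ε₀ : ℝ)
    (hSXint : IntegrableOn SX (Set.Icc (-π) π))
    (hSXnonneg : ∀ ω, 0 ≤ SX ω)
    (hrmeas : Measurable r) (hgmeas : Measurable g)
    (hrnonneg : ∀ ω, 0 ≤ r ω)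
    (hgnonneg : ∀ ω, 0 ≤ g ω)
    (hgSXint : IntegrableOn (fun ω => g ω * SX ω) (Set.Icc (-π) π))
    (hclose : ∀ᵐ ω : ℝ, ω ∈ Set.Icc (-π) π → |r ω - g ω| ≤ ε₀) :
    IntegrableOn (fun ω => r ω * SX ω) (Set.Icc (-π) π) ∧
    (∀ n : ℕ, 1 ≤ n →
      |gmsd (fun ω => r ω * SX ω) n - gmsd (fun ω => g ω * SX ω) n| ≤
        ε₀ * gmsd SX n) ∧
    (∀ n : ℕ, 1 ≤ n → 0 < gmsd (fun ω => g ω * SX ω) n →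
      |gmsd (fun ω => r ω * SX ω) n / gmsd (fun ω => g ω * SX ω) n - 1| ≤
        ε₀ * (gmsd SX n / gmsd (fun ω => g ω * SX ω) n)) := by
  have hpi : -π ≤ π := by linarith [Real.pi_pos]
  -- a.e. closeness on the restricted measures
  have hcloseIcc : ∀ᵐ ω ∂(volume.restrict (Set.Icc (-π) π)), |r ω - g ω| ≤ ε₀ :=
    (ae_restrict_iff' measurableSet_Icc).mpr hclose
  have hcloseIoc : ∀ᵐ ω ∂(volume.restrict (Set.Ioc (-π) π)), |r ω - g ω| ≤ ε₀ :=
    (ae_restrict_iff' measurableSet_Ioc).mpr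
      (hclose.mono fun ω hω hmem => hω (Set.Ioc_subset_Icc_self hmem))
  -- Integrability of (r - g) * SX
  have hsubint : IntegrableOn (fun ω => (r ω - g ω) * SX ω) (Set.Icc (-π) π) := by
    refine Integrable.mono' (hSXint.const_mul ε₀)
      (((hrmeas.sub hgmeas).aestronglyMeasurable).mul hSXint.aestronglyMeasurable) ?_
    refine hcloseIcc.mono fun ω hω => ?_
    rw [Real.norm_eq_abs, abs_mul, abs_of_nonneg (hSXnonneg ω)]
    exact mul_le_mul_of_nonneg_right hω (hSXnonneg ω)
  have hrSXint : IntegrableOn (fun ω => r ω * SX ω) (Set.Icc (-π) π) := by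
    have heq : (fun ω => r ω * SX ω)
        = fun ω => g ω * SX ω + (r ω - g ω) * SX ω := funext fun ω => by ring
    rw [heq]; exact hgSXint.add hsubint
  have hmain : ∀ n : ℕ, 1 ≤ n →
      |gmsd (fun ω => r ω * SX ω) n - gmsd (fun ω => g ω * SX ω) n| ≤ ε₀ * gmsd SX n := by
    intro n hn
    have hn0 : (0:ℝ) ≤ (n:ℝ) := Nat.cast_nonneg n
    set F := fejerKernel n with hFdef
    have hFaesm : ∀ μ : Measure ℝ, AEStronglyMeasurable F μ :=
      fun μ => (fejer_continuous n).aestronglyMeasurable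
    -- integrability on Ioc of all three products with F
    have hFr : IntegrableOn (fun ω => F ω * (r ω * SX ω)) (Set.Ioc (-π) π) :=
      ((hrSXint.mono_set Set.Ioc_subset_Icc_self).bdd_mul (hFaesm _) (ae_of_all _ (fejer_bound n).choose_spec))
    have hFg : IntegrableOn (fun ω => F ω * (g ω * SX ω)) (Set.Ioc (-π) π) :=
      ((hgSXint.mono_set Set.Ioc_subset_Icc_self).bdd_mul (hFaesm _) (ae_of_all _ (fejer_bound n).choose_spec))
    have hFS : IntegrableOn (fun ω => F ω * SX ω) (Set.Ioc (-π) π) :=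
      ((hSXint.mono_set Set.Ioc_subset_Icc_self).bdd_mul (hFaesm _) (ae_of_all _ (fejer_bound n).choose_spec))
    have hgm : ∀ S : ℝ → ℝ, gmsd S n = n * ∫ ω in Set.Ioc (-π) π, F ω * S ω := by
      intro S
      rw [gmsd, intervalIntegral.integral_of_le hpi]
    have hdiff : gmsd (fun ω => r ω * SX ω) n - gmsd (fun ω => g ω * SX ω) n
        = n * ∫ ω in Set.Ioc (-π) π,
            (F ω * (r ω * SX ω) - F ω * (g ω * SX ω)) := by
      rw [hgm, hgm, ← mul_sub, integral_sub hFr hFg]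
    rw [hdiff, hgm]
    have hkey : |∫ ω in Set.Ioc (-π) π, (F ω * (r ω * SX ω) - F ω * (g ω * SX ω))|
        ≤ ∫ ω in Set.Ioc (-π) π, ε₀ * (F ω * SX ω) := by
      rw [← Real.norm_eq_abs]
      refine norm_integral_le_of_norm_le (hFS.const_mul ε₀) ?_
      refine hcloseIoc.mono fun ω hω => ?_
      have h1 : F ω * (r ω * SX ω) - F ω * (g ω * SX ω)
          = (r ω - g ω) * (F ω * SX ω) := by ring
      rw [Real.norm_eq_abs, h1, abs_mul,
        abs_of_nonneg (mul_nonneg (fejer_nonneg n ω) (hSXnonneg ω))]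
      exact mul_le_mul_of_nonneg_right hω
        (mul_nonneg (fejer_nonneg n ω) (hSXnonneg ω))
    calc |(n:ℝ) * ∫ ω in Set.Ioc (-π) π, (F ω * (r ω * SX ω) - F ω * (g ω * SX ω))|
        = (n:ℝ) * |∫ ω in Set.Ioc (-π) π, (F ω * (r ω * SX ω) - F ω * (g ω * SX ω))| := by
          rw [abs_mul, abs_of_nonneg hn0]
      _ ≤ (n:ℝ) * ∫ ω in Set.Ioc (-π) π, ε₀ * (F ω * SX ω) :=
          mul_le_mul_of_nonneg_left hkey hn0
      _ = ε₀ * ((n:ℝ) * ∫ ω in Set.Ioc (-π) π, F ω * SX ω) := by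
          rw [integral_const_mul]; ring
  refine ⟨hrSXint, hmain, ?_⟩
  intro n hn hB
  have h := hmain n hn
  rw [div_sub_one hB.ne', abs_div, abs_of_pos hB, ← mul_div_assoc]
  exact (div_le_div_iff_of_pos_right hB).mpr h
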